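/- arXiv:2310.18465 — 4 statements merged into one kernel-verified Lean document; each statement's English description precedes it below -/
import Mathlib

section
/- If f is a monotone nondecreasing submodular set function on [n] with f(∅)=0, S* is a set of size at most k maximizing f among sets of size at most k, and S^(0)=∅ ⊂ S^(1) ⊂ ... ⊂ S^(k) is a chain with |S^(i)|=i such that at each step i the added element is ε_i-greedy, i.e. max_{a∉S^(i-1)} f(S^(i-1)∪{a}) − f(S^(i)) ≤ ε_i with ε_i ≥ 0, then f(S^(k)) + Σ_{i=1}^k ε_i ≥ (1 − (1 − 1/k)^k) · f(S*) ≥ (1 − e^{-1}) · f(S*). -/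
/-!
By submodularity, `f S* - f (S i)` is at most the sum of the marginal gains at `S i` of the at
most `k` elements of `S*`, each of which exceeds the greedy gain `f (S (i+1)) - f (S i)` by at most
`ε (i+1)`. Hence the gap `f S* - f (S i)` shrinks by the factor `1 - 1/k` per step, up to the
additive error `ε (i+1)`, and after `k` steps it is at most `(1 - 1/k)^k f S* + ∑ ε i`; finally
`(1 - 1/k)^k ≤ e⁻¹`.
-/

open Finset

section Submodular

variable {α : Type*} [DecidableEq α] {f : Finset α → ℝ}

theorem marginal_le_marginal_of_subset (hmono : Monotone f)
    (hsub : ∀ A B, f (A ∪ B) + f (A ∩ B) ≤ f A + f B) {A X : Finset α} (hAX : A ⊆ X)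
    (b : α) :
    f (insert b X) - f X ≤ f (insert b A) - f A := by
  have hunion : X ∪ insert b A = insert b X := by
    rw [union_insert, union_eq_left.2 hAX]
  have hinter : A ⊆ X ∩ insert b A := subset_inter hAX (subset_insert b A)
  have := hsub X (insert b A)
  rw [hunion] at this
  linarith [hmono hinter]

theorem le_add_sum_marginal (hmono : Monotone f)
    (hsub : ∀ A B, f (A ∪ B) + f (A ∩ B) ≤ f A + f B) (A T : Finset α) :
    f (A ∪ T) ≤ f A + ∑ a ∈ T \ A, (f (insert a A) - f A) := by
  induction T using Finset.induction with
  | empty => simp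
  | insert b T hbT ih =>
    by_cases hbA : b ∈ A
    · rwa [union_insert, insert_eq_of_mem (mem_union_left T hbA), insert_sdiff_of_mem T hbA]
    · have hb : b ∉ T \ A := fun h => hbT (mem_sdiff.1 h).1
      rw [union_insert, insert_sdiff_of_notMem T hbA, sum_insert hb]
      linarith [marginal_le_marginal_of_subset hmono hsub (subset_union_left : A ⊆ A ∪ T) b]

theorem sub_le_one_sub_inv_mul_sub_add (hmono : Monotone f)
    (hsub : ∀ A B, f (A ∪ B) + f (A ∩ B) ≤ f A + f B) {k : ℕ} (hk : 0 < k)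
    {T A B : Finset α} (hT : #T ≤ k) (hAB : A ⊆ B) {ε : ℝ} (hε : 0 ≤ ε)
    (hgreedy : ∀ a ∉ A, f (insert a A) - f B ≤ ε) :
    f T - f B ≤ (1 - 1 / k) * (f T - f A) + ε := by
  have hδ : 0 ≤ f B - f A + ε := by linarith [hmono hAB]
  have hcard : (#(T \ A) : ℝ) ≤ k := by exact_mod_cast (card_le_card sdiff_subset).trans hT
  have hgap : f T - f A ≤ k * (f B - f A + ε) :=
    calc f T - f A ≤ f (A ∪ T) - f A := by linarith [hmono (subset_union_right : T ⊆ A ∪ T)]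
      _ ≤ ∑ a ∈ T \ A, (f (insert a A) - f A) := by
        linarith [le_add_sum_marginal hmono hsub A T]
      _ ≤ #(T \ A) • (f B - f A + ε) :=
        sum_le_card_nsmul _ _ _ fun a ha => by linarith [hgreedy a (mem_sdiff.1 ha).2]
      _ ≤ k * (f B - f A + ε) := by
        rw [nsmul_eq_mul]; exact mul_le_mul_of_nonneg_right hcard hδ
  have hkpos : (0 : ℝ) < k := by exact_mod_cast hk
  have : (f T - f A) / k ≤ f B - f A + ε := by rwa [div_le_iff₀' hkpos]
  linarith [show (1 - 1 / k) * (f T - f A) = f T - f A - (f T - f A) / k by ring]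

end Submodular

theorem le_pow_mul_add_sum_Icc_of_le_mul_add {c : ℝ} (hc0 : 0 ≤ c) (hc1 : c ≤ 1)
    {g e : ℕ → ℝ} {k : ℕ} (he : ∀ i < k, 0 ≤ e (i + 1))
    (hrec : ∀ i < k, g (i + 1) ≤ c * g i + e (i + 1)) :
    g k ≤ c ^ k * g 0 + ∑ i ∈ Icc 1 k, e i := by
  induction k with
  | zero => simp
  | succ k ih =>
    have ih := ih (fun i hi => he i (by omega)) (fun i hi => hrec i (by omega))
    have hsum : 0 ≤ ∑ i ∈ Icc 1 k, e i :=
      sum_nonneg fun i hi => by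
        obtain ⟨j, rfl⟩ : ∃ j, i = j + 1 := ⟨i - 1, by grind⟩
        exact he j (by grind)
    rw [sum_Icc_succ_top (by omega)]
    calc g (k + 1) ≤ c * g k + e (k + 1) := hrec k (by omega)
      _ ≤ c * (c ^ k * g 0 + ∑ i ∈ Icc 1 k, e i) + e (k + 1) := by gcongr
      _ ≤ c ^ (k + 1) * g 0 + (∑ i ∈ Icc 1 k, e i + e (k + 1)) := by
        rw [pow_succ]; nlinarith

theorem stmt_0_general (n k : ℕ) (hk : 1 ≤ k) (f : Finset (Fin n) → ℝ)
    (hmono : ∀ A B : Finset (Fin n), A ⊆ B → f A ≤ f B)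
    (hsub : ∀ A B : Finset (Fin n), f (A ∪ B) + f (A ∩ B) ≤ f A + f B)
    (hempty : f ∅ = 0)
    (Sstar : Finset (Fin n)) (hSstar : Sstar.card ≤ k)
    (S : ℕ → Finset (Fin n)) (hS0 : S 0 = ∅)
    (hchain : ∀ i < k, S i ⊆ S (i + 1))
    (ε : ℕ → ℝ) (hε : ∀ i, 1 ≤ i → i ≤ k → 0 ≤ ε i)
    (hgreedy : ∀ i, 1 ≤ i → i ≤ k →
      ∀ a ∉ S (i - 1), f (insert a (S (i - 1))) - f (S i) ≤ ε i) :
    f (S k) + ∑ i ∈ Finset.Icc 1 k, ε i ≥ (1 - (1 - 1 / (k : ℝ)) ^ k) * f Sstar ∧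
      (1 - (1 - 1 / (k : ℝ)) ^ k) * f Sstar ≥ (1 - Real.exp (-1)) * f Sstar := by
  have hmono' : Monotone f := fun A B => hmono A B
  have hk' : (1 : ℝ) ≤ k := by exact_mod_cast hk
  have hc0 : 0 ≤ 1 - 1 / (k : ℝ) := by rw [sub_nonneg, div_le_one₀ (by linarith)]; exact hk'
  have hc1 : 1 - 1 / (k : ℝ) ≤ 1 := sub_le_self 1 (by positivity)
  have hgap := le_pow_mul_add_sum_Icc_of_le_mul_add hc0 hc1 (g := fun i => f Sstar - f (S i))
    (fun i hi => hε (i + 1) (by omega) hi) fun i hi =>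
      sub_le_one_sub_inv_mul_sub_add hmono' hsub (by omega) hSstar (hchain i hi)
        (hε (i + 1) (by omega) hi) (hgreedy (i + 1) (by omega) hi)
  simp only [hS0, hempty, sub_zero] at hgap
  have hexp : (1 - 1 / (k : ℝ)) ^ k ≤ Real.exp (-1) := Real.one_sub_div_pow_le_exp_neg hk'
  have hSstar_nonneg : 0 ≤ f Sstar := hempty ▸ hmono' (empty_subset Sstar)
  constructor
  · linarith [show (1 - (1 - 1 / (k : ℝ)) ^ k) * f Sstar
      = f Sstar - (1 - 1 / (k : ℝ)) ^ k * f Sstar by ring]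
  · exact mul_le_mul_of_nonneg_right (by linarith) hSstar_nonneg

/-- approximate-greedy guarantee for monotone submodular maximization. -/
theorem stmt_0 (n k : ℕ) (hk : 1 ≤ k) (f : Finset (Fin n) → ℝ)
    (hmono : ∀ A B : Finset (Fin n), A ⊆ B → f A ≤ f B)
    (hsub : ∀ A B : Finset (Fin n), f (A ∪ B) + f (A ∩ B) ≤ f A + f B)
    (hempty : f ∅ = 0)
    (Sstar : Finset (Fin n)) (hSstar : Sstar.card ≤ k)
    (hopt : ∀ S : Finset (Fin n), S.card ≤ k → f S ≤ f Sstar)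
    (S : ℕ → Finset (Fin n)) (hS0 : S 0 = ∅)
    (hScard : ∀ i ≤ k, (S i).card = i)
    (hchain : ∀ i < k, S i ⊆ S (i + 1))
    (ε : ℕ → ℝ) (hε : ∀ i, 1 ≤ i → i ≤ k → 0 ≤ ε i)
    (hgreedy : ∀ i, 1 ≤ i → i ≤ k →
      ∀ a ∉ S (i - 1), f (insert a (S (i - 1))) - f (S i) ≤ ε i) :
    f (S k) + ∑ i ∈ Finset.Icc 1 k, ε i ≥ (1 - (1 - 1 / (k : ℝ)) ^ k) * f Sstar ∧
      (1 - (1 - 1 / (k : ℝ)) ^ k) * f Sstar ≥ (1 - Real.exp (-1)) * f Sstar :=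
  stmt_0_general n k hk f hmono hsub hempty Sstar hSstar S hS0 hchain ε hε hgreedy
end

section
/- Let n, k be positive integers with k ≤ n/3, let H_m denote the m-th harmonic number, and let Δ be a real with 0 < Δ ≤ 1/(8k²). Define f on subsets S of [n] of size at most k by: f(S) = H_{|S|+k} − H_k if S = {1,...,|S|}; f(S) = H_{2k} − H_k − Δ if |S| = k and S ≠ {1,...,k}; and f(S) = H_{|S|+k} − H_k − Δ/k otherwise. Then f is monotone nondecreasing: f(A) ≤ f(B) whenever A ⊆ B with |B| ≤ k. -/
/-!
Write `g m = H (m + k) - H k`. Every value `f S` lies in `[g |S| - Δ, g |S|]`, the top of the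
interval being attained exactly on prefixes. For `A ⊊ B` with `|B| ≤ k`, the harmonic sum
`g |B| - g |A|` has at least one term, each at least `1 / (2k) ≥ Δ`, so the interval for `B`
lies above the one for `A`.
-/

/-- `H m`: the `m`-th harmonic number as a real. -/
noncomputable def H (m : ℕ) : ℝ := ∑ j ∈ Finset.range m, 1 / ((j : ℝ) + 1)

/-- The set `{1, …, m}` of the first `m` elements of the ground set `Fin n`. -/
def prefixSet (n m : ℕ) : Finset (Fin n) := Finset.univ.filter (fun x => (x : ℕ) < m)

/-- The hard instance `f_{H₀}` defined via harmonic numbers with gap `Δ`. -/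
noncomputable def hardF (n k : ℕ) (Δ : ℝ) (S : Finset (Fin n)) : ℝ :=
  if S = prefixSet n S.card then H (S.card + k) - H k
  else if S.card = k then H (2 * k) - H k - Δ
  else H (S.card + k) - H k - Δ / k

lemma div_le_H_sub_H {a b : ℕ} (hab : a ≤ b) : ((b : ℝ) - a) / b ≤ H b - H a := by
  rw [H, H, ← Finset.sum_Ico_eq_sub _ hab]
  calc ((b : ℝ) - a) / b = ∑ _j ∈ Finset.Ico a b, (1 : ℝ) / b := by
        rw [Finset.sum_const, Nat.card_Ico, nsmul_eq_mul, Nat.cast_sub hab]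
        ring
    _ ≤ ∑ j ∈ Finset.Ico a b, 1 / ((j : ℝ) + 1) := by
        refine Finset.sum_le_sum fun j hj => one_div_le_one_div_of_le (by positivity) ?_
        exact_mod_cast (Finset.mem_Ico.1 hj).2

lemma one_div_two_mul_le_H_add_sub_H_add {a b k : ℕ} (hab : a < b) (hbk : b ≤ k) :
    1 / (2 * (k : ℝ)) ≤ H (b + k) - H (a + k) := by
  have hab' : (a : ℝ) + 1 ≤ b := by exact_mod_cast hab
  have hbk' : (b : ℝ) ≤ k := by exact_mod_cast hbk
  have hk : (0 : ℝ) < k := by linarith [(Nat.cast_nonneg a : (0 : ℝ) ≤ a)]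
  calc 1 / (2 * (k : ℝ)) ≤ ((b : ℝ) - a) / (b + k) :=
        div_le_div₀ (by linarith) (by linarith) (by positivity) (by linarith)
    _ = (((b + k : ℕ) : ℝ) - (a + k : ℕ)) / (b + k : ℕ) := by push_cast; ring
    _ ≤ H (b + k) - H (a + k) := div_le_H_sub_H (by omega)

lemma hardF_le {n k : ℕ} {Δ : ℝ} (hΔ : 0 ≤ Δ) (S : Finset (Fin n)) :
    hardF n k Δ S ≤ H (S.card + k) - H k := by
  unfold hardF
  split_ifs with _ hS
  · exact le_rfl
  · rw [hS, two_mul]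
    linarith
  · have : 0 ≤ Δ / k := by positivity
    linarith

lemma H_add_sub_sub_le_hardF {n k : ℕ} {Δ : ℝ} (hΔ : 0 ≤ Δ) (S : Finset (Fin n)) :
    H (S.card + k) - H k - Δ ≤ hardF n k Δ S := by
  unfold hardF
  split_ifs with _ hSk
  · linarith
  · rw [hSk, two_mul]
  · have : Δ / k ≤ Δ := by
      rcases k.eq_zero_or_pos with rfl | hk
      · simpa using hΔ
      · exact div_le_self hΔ (by exact_mod_cast hk)
    linarith

theorem stmt_3_general (n k : ℕ)
    (Δ : ℝ) (hΔ0 : 0 < Δ) (hΔ : Δ ≤ 1 / (8 * (k : ℝ) ^ 2)) :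
    ∀ A B : Finset (Fin n), A ⊆ B → B.card ≤ k → hardF n k Δ A ≤ hardF n k Δ B := by
  intro A B hAB hBk
  rcases hAB.eq_or_ssubset with rfl | hAB
  · exact le_rfl
  have hcard : A.card < B.card := Finset.card_lt_card hAB
  have hk : (1 : ℝ) ≤ k := by exact_mod_cast (show 1 ≤ k by omega)
  have hΔk : Δ ≤ 1 / (2 * (k : ℝ)) :=
    hΔ.trans (one_div_le_one_div_of_le (by positivity) (by nlinarith))
  have hgap := one_div_two_mul_le_H_add_sub_H_add hcard hBk
  calc hardF n k Δ A ≤ H (A.card + k) - H k := hardF_le hΔ0.le A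
    _ ≤ H (B.card + k) - H k - Δ := by linarith
    _ ≤ hardF n k Δ B := H_add_sub_sub_le_hardF hΔ0.le B

/-- the hard instance is monotone nondecreasing on sets of size at most `k`. -/
theorem stmt_3 (n k : ℕ) (hn : 0 < n) (hk : 0 < k) (hkn : 3 * k ≤ n)
    (Δ : ℝ) (hΔ0 : 0 < Δ) (hΔ : Δ ≤ 1 / (8 * (k : ℝ) ^ 2)) :
    ∀ A B : Finset (Fin n), A ⊆ B → B.card ≤ k → hardF n k Δ A ≤ hardF n k Δ B :=
  stmt_3_general n k Δ hΔ0 hΔ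
end

section
/- Let t be a nonnegative function on subsets of [n], and for each j let T_j = Σ_{|S|=j} t(S). Fix 1 ≤ i ≤ k with n > 2k. Then Σ over all sequences (x_i,...,x_k) of distinct elements of {k+1,...,n} of [Σ_{j=i}^{k−1} t({1,...,i−1}∪{x_i,...,x_j}) + k²·t({1,...,i−1}∪{x_i,...,x_k})] ≤ Σ_{j=i}^{k−1} ((n−k−j+i−1)!·(j−i+1)!/(n−2k+i−1)!)·T_j + k²·(k−i+1)!·T_k. -/
/-- `sumCard n t j = T_j`, the sum of `t` over all subsets of `[n]` of cardinality `j`. -/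
noncomputable def sumCard (n : ℕ) (t : Finset (Fin n) → ℝ) (j : ℕ) : ℝ :=
  ∑ S ∈ Finset.univ.filter (fun S : Finset (Fin n) => S.card = j), t S

/-!
After exchanging the sums over `x` and `j`, it suffices to bound, for each `j`, the sum of
`t ({1, …, i-1} ∪ {x_i, …, x_j})` over all sequences `x` by the stated coefficient times `T_j`.
Each such set has `j` elements, and a fixed set `S` arises from at most
`(j-i+1)! · (n-k-(j-i+1))(n-k-(j-i+2))⋯` (with `k-j` factors) sequences: `x_i, …, x_j` is an
ordering of `S \ {1, …, i-1}`, and `x_{j+1}, …, x_k` are distinct among the remaining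
`n-k-(j-i+1)` elements of `{k+1, …, n}`. This falling factorial is
`(n-k-j+i-1)! / (n-2k+i-1)!`.
-/

open Finset Nat

theorem sum_comp_le_mul_sum_of_card_fiber_le {α β R : Type*} [DecidableEq β]
    [Semiring R] [PartialOrder R] [IsOrderedRing R]
    {s : Finset α} {T : Finset β} {g : α → β} (hg : ∀ a ∈ s, g a ∈ T)
    {f : β → R} (hf : ∀ b ∈ T, 0 ≤ f b) {N : ℕ} (hN : ∀ b ∈ T, #{a ∈ s | g a = b} ≤ N) :
    ∑ a ∈ s, f (g a) ≤ N * ∑ b ∈ T, f b := by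
  rw [← sum_fiberwise_of_maps_to hg, mul_sum]
  gcongr with b hb
  rw [sum_congr rfl fun a ha => by rw [(mem_filter.1 ha).2], sum_const, nsmul_eq_mul]
  exact mul_le_mul_of_nonneg_right (Nat.mono_cast (hN b hb)) (hf b hb)

/-- Such an embedding is determined by the pair of embeddings `{p | P p} ↪ B` and
`{p | ¬ P p} ↪ U \ B` it restricts to. -/
theorem card_embedding_image_filter_eq_le {ι α : Type*} [Fintype ι] [Fintype α] [DecidableEq α]
    (P : ι → Prop) [DecidablePred P] (U B : Finset α) :
    #{x : ι ↪ α | (∀ p, x p ∈ U) ∧ ({p | P p} : Finset ι).image x = B}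
      ≤ (#{p | P p})! * (#U - #{p | P p}).descFactorial #{p | ¬ P p} := by
  set F : Finset (ι ↪ α) := {x | (∀ p, x p ∈ U) ∧ ({p | P p} : Finset ι).image x = B}
  rcases F.eq_empty_or_nonempty with hF | ⟨x₀, hx₀⟩
  · simp [hF]
  obtain ⟨hx₀U, rfl⟩ := (mem_filter.1 hx₀).2
  have hmem {x : ι ↪ α} (hx : x ∈ F) : (∀ p, x p ∈ U) ∧ ({p | P p} : Finset ι).image x
      = ({p | P p} : Finset ι).image x₀ := (mem_filter.1 hx).2
  have hin {x : ι ↪ α} (hx : x ∈ F) {p : ι} (hp : P p) :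
      x p ∈ ({p | P p} : Finset ι).image x₀ :=
    (hmem hx).2 ▸ mem_image_of_mem x (by simpa using hp)
  have hout {x : ι ↪ α} (hx : x ∈ F) {p : ι} (hp : ¬ P p) :
      x p ∈ U \ ({p | P p} : Finset ι).image x₀ := by
    refine mem_sdiff.2 ⟨(hmem hx).1 p, fun h => ?_⟩
    obtain ⟨q, hq, hqp⟩ := mem_image.1 ((hmem hx).2 ▸ h)
    exact hp (x.injective hqp ▸ (mem_filter.1 hq).2)
  let split (x : F) : ({p // P p} ↪ ({p | P p} : Finset ι).image x₀) ×
      ({p // ¬ P p} ↪ (U \ ({p | P p} : Finset ι).image x₀ : Finset α)) :=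
    (⟨fun p => ⟨x.1 p, hin x.2 p.2⟩, fun _ _ h => Subtype.ext (x.1.injective congr($h.1))⟩,
     ⟨fun p => ⟨x.1 p, hout x.2 p.2⟩, fun _ _ h => Subtype.ext (x.1.injective congr($h.1))⟩)
  have hsplit : Function.Injective split := by
    rintro ⟨x, hx⟩ ⟨y, hy⟩ h
    obtain ⟨h₁, h₂⟩ := Prod.mk.inj h
    refine Subtype.ext (DFunLike.ext _ _ fun p => ?_)
    by_cases hp : P p
    · exact congrArg Subtype.val (DFunLike.congr_fun h₁ ⟨p, hp⟩)
    · exact congrArg Subtype.val (DFunLike.congr_fun h₂ ⟨p, hp⟩)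
  have hcard : #(({p | P p} : Finset ι).image x₀) = #{p | P p} :=
    card_image_of_injective _ x₀.injective
  have hsub : ({p | P p} : Finset ι).image x₀ ⊆ U := by
    intro a ha
    obtain ⟨p, -, rfl⟩ := mem_image.1 ha
    exact hx₀U p
  calc #F = Fintype.card F := (Fintype.card_coe F).symm
    _ ≤ _ := Fintype.card_le_of_injective split hsplit
    _ = _ := by
      rw [Fintype.card_prod, Fintype.card_embedding_eq, Fintype.card_embedding_eq,
        Fintype.card_coe, Fintype.card_coe, Fintype.card_subtype, Fintype.card_subtype,
        card_sdiff_of_subset hsub, hcard, descFactorial_self]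

theorem cast_factorial_div_factorial_sub {K : Type*} [DivisionSemiring K] [CharZero K]
    {a c : ℕ} (h : c ≤ a) : (a ! : K) / (a - c)! = a.descFactorial c := by
  rw [div_eq_iff (by exact_mod_cast (a - c).factorial_ne_zero), ← Nat.cast_mul, mul_comm,
    factorial_mul_descFactorial h]

theorem Fin.card_filter_val_add_le (m i j : ℕ) :
    #{p : Fin m | (p : ℕ) + i ≤ j} = min m (j + 1 - i) := by
  rw [← Fin.card_filter_val_lt]
  congr 1
  exact filter_congr fun p _ => by omega

theorem Fin.card_filter_not_val_add_le (m i j : ℕ) :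
    #{p : Fin m | ¬ (p : ℕ) + i ≤ j} = m - min m (j + 1 - i) := by
  have := card_filter_add_card_filter_not (s := (univ : Finset (Fin m))) fun p => (p : ℕ) + i ≤ j
  rw [Fin.card_filter_val_add_le, Finset.card_univ, Fintype.card_fin] at this
  omega

theorem Fin.card_filter_le_val (n k : ℕ) : #{v : Fin n | k ≤ (v : ℕ)} = n - k := by
  have := card_filter_add_card_filter_not (s := (univ : Finset (Fin n))) fun v => k ≤ (v : ℕ)
  have hlt : #{v : Fin n | ¬ k ≤ (v : ℕ)} = min n k := by
    rw [← Fin.card_filter_val_lt]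
    exact congrArg card (filter_congr fun v _ => not_le)
  rw [hlt, Finset.card_univ, Fintype.card_fin] at this
  omega

theorem card_prefixSet {n m : ℕ} (h : m ≤ n) : #(prefixSet n m) = m := by
  rw [prefixSet, Fin.card_filter_val_lt, min_eq_right h]

/-- The sequences `(x_i, …, x_k)` of distinct elements of `{k+1, …, n}`, with `x_{i+p}` stored
at position `p`; elements of `[n]` are `0`-indexed, so `{k+1, …, n}` is `{v | k ≤ v}`. -/
noncomputable def tailSeqs (n k i : ℕ) : Finset (Fin (k - i + 1) ↪ Fin n) :=
  {x | ∀ p, k ≤ ((x p : Fin n) : ℕ)}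

/-- The set `{1, …, i-1} ∪ {x_i, …, x_j}`. -/
def prefixUnion (n k i j : ℕ) (x : Fin (k - i + 1) ↪ Fin n) : Finset (Fin n) :=
  prefixSet n (i - 1) ∪ ({p | (p : ℕ) + i ≤ j} : Finset (Fin (k - i + 1))).image x

section

variable {n k i j : ℕ} {x : Fin (k - i + 1) ↪ Fin n}

theorem disjoint_prefixSet_image_of_mem_tailSeqs (hx : x ∈ tailSeqs n k i) (hik : i ≤ k)
    (s : Finset (Fin (k - i + 1))) : Disjoint (prefixSet n (i - 1)) (s.image x) := by
  refine disjoint_left.2 fun v hv hv' => ?_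
  obtain ⟨p, -, rfl⟩ := mem_image.1 hv'
  have := (mem_filter.1 hx).2 p
  have := (mem_filter.1 hv).2
  omega

theorem card_prefixUnion (hx : x ∈ tailSeqs n k i) (hi : 1 ≤ i) (hij : i ≤ j) (hjk : j ≤ k)
    (hkn : k ≤ n) : #(prefixUnion n k i j x) = j := by
  rw [prefixUnion,
    card_union_of_disjoint (disjoint_prefixSet_image_of_mem_tailSeqs hx (by omega) _),
    card_image_of_injective _ x.injective, card_prefixSet (by omega), Fin.card_filter_val_add_le]
  omega

theorem card_filter_prefixUnion_eq_le (hij : i ≤ j) (hjk : j ≤ k) (S : Finset (Fin n)) :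
    #{x ∈ tailSeqs n k i | prefixUnion n k i j x = S}
      ≤ (j - i + 1)! * (n - k - (j - i + 1)).descFactorial (k - j) := by
  refine (card_le_card ?_).trans ((card_embedding_image_filter_eq_le
    (fun p : Fin (k - i + 1) => (p : ℕ) + i ≤ j) ({v | k ≤ (v : ℕ)} : Finset (Fin n))
    (S \ prefixSet n (i - 1))).trans_eq ?_)
  · intro x hx
    obtain ⟨hxT, rfl⟩ := mem_filter.1 hx
    simp only [mem_filter, mem_univ, true_and]
    exact ⟨(mem_filter.1 hxT).2,
      (union_sdiff_cancel_left (disjoint_prefixSet_image_of_mem_tailSeqs hxT (by omega) _)).symm⟩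
  · rw [Fin.card_filter_val_add_le, Fin.card_filter_not_val_add_le, Fin.card_filter_le_val,
      show min (k - i + 1) (j + 1 - i) = j - i + 1 by omega,
      show k - i + 1 - (j - i + 1) = k - j by omega]

theorem sum_prefixUnion_le (hi : 1 ≤ i) (hij : i ≤ j) (hjk : j ≤ k) (hkn : k ≤ n)
    {t : Finset (Fin n) → ℝ} (ht : ∀ S, 0 ≤ t S) :
    ∑ x ∈ tailSeqs n k i, t (prefixUnion n k i j x)
      ≤ ((j - i + 1)! * (n - k - (j - i + 1)).descFactorial (k - j) : ℕ) * sumCard n t j :=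
  sum_comp_le_mul_sum_of_card_fiber_le (T := ({S | #S = j} : Finset (Finset (Fin n))))
    (fun _ hx => mem_filter.2 ⟨mem_univ _, card_prefixUnion hx hi hij hjk hkn⟩)
    (fun S _ => ht S) (fun S _ => card_filter_prefixUnion_eq_le hij hjk S)

end

theorem stmt_7_general (n k i : ℕ) (hn : 2 * k < n) (hi1 : 1 ≤ i) (hik : i ≤ k)
    (t : Finset (Fin n) → ℝ) (ht : ∀ S, 0 ≤ t S) :
    ∑ x ∈ Finset.univ.filter
        (fun x : Fin (k - i + 1) ↪ Fin n => ∀ p, k ≤ ((x p : Fin n) : ℕ)),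
      ((∑ j ∈ Finset.Ico i k,
          t (prefixSet n (i - 1) ∪
            (Finset.univ.filter (fun p : Fin (k - i + 1) => (p : ℕ) + i ≤ j)).image x))
        + (k : ℝ) ^ 2 *
          t (prefixSet n (i - 1) ∪ (Finset.univ : Finset (Fin (k - i + 1))).image x))
      ≤ (∑ j ∈ Finset.Ico i k,
          ((Nat.factorial (n - k - j + i - 1) * Nat.factorial (j - i + 1) : ℝ)
              / (Nat.factorial (n - 2 * k + i - 1) : ℝ)) * sumCard n t j)
        + (k : ℝ) ^ 2 * (Nat.factorial (k - i + 1) : ℝ) * sumCard n t k := by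
  have hcoeff (j : ℕ) (hij : i ≤ j) (hjk : j < k) :
      ((n - k - j + i - 1)! * (j - i + 1)! : ℝ) / (n - 2 * k + i - 1)!
        = ((j - i + 1)! * (n - k - (j - i + 1)).descFactorial (k - j) : ℕ) := by
    rw [mul_comm, mul_div_assoc, show n - k - j + i - 1 = n - k - (j - i + 1) by omega,
      show n - 2 * k + i - 1 = n - k - (j - i + 1) - (k - j) by omega,
      cast_factorial_div_factorial_sub (by omega), Nat.cast_mul]
  have hfull (x : Fin (k - i + 1) ↪ Fin n) :
      prefixUnion n k i k x = prefixSet n (i - 1) ∪ univ.image x := by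
    rw [prefixUnion, filter_true_of_mem fun p _ => by have := p.isLt; omega]
  rw [sum_add_distrib, sum_comm, ← mul_sum]
  refine add_le_add (sum_le_sum fun j hj => ?_) ?_
  · obtain ⟨hij, hjk⟩ := mem_Ico.1 hj
    rw [hcoeff j hij hjk]
    exact sum_prefixUnion_le hi1 hij hjk.le (by omega) ht
  · have hk := sum_prefixUnion_le hi1 hik le_rfl (by omega) ht
    simp only [hfull, Nat.sub_self, descFactorial_zero, mul_one] at hk
    rw [mul_assoc]
    exact mul_le_mul_of_nonneg_left hk (by positivity)

/-- counting bound for the total mass over all sequences `(x_i,…,x_k)` of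
distinct elements of `{k+1,…,n}` (encoded as embeddings `Fin (k-i+1) ↪ Fin n` whose
values have index at least `k`). -/
theorem stmt_7 (n k i : ℕ) (hk : 1 ≤ k) (hn : 2 * k < n) (hi1 : 1 ≤ i) (hik : i ≤ k)
    (t : Finset (Fin n) → ℝ) (ht : ∀ S, 0 ≤ t S) :
    ∑ x ∈ Finset.univ.filter
        (fun x : Fin (k - i + 1) ↪ Fin n => ∀ p, k ≤ ((x p : Fin n) : ℕ)),
      ((∑ j ∈ Finset.Ico i k,
          t (prefixSet n (i - 1) ∪
            (Finset.univ.filter (fun p : Fin (k - i + 1) => (p : ℕ) + i ≤ j)).image x))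
        + (k : ℝ) ^ 2 *
          t (prefixSet n (i - 1) ∪ (Finset.univ : Finset (Fin (k - i + 1))).image x))
      ≤ (∑ j ∈ Finset.Ico i k,
          ((Nat.factorial (n - k - j + i - 1) * Nat.factorial (j - i + 1) : ℝ)
              / (Nat.factorial (n - 2 * k + i - 1) : ℝ)) * sumCard n t j)
        + (k : ℝ) ^ 2 * (Nat.factorial (k - i + 1) : ℝ) * sumCard n t k :=
  stmt_7_general n k i hn hi1 hik t ht
end

section
/- Let P and Q be two probability measures on a measurable space and A an event. Then P(A) + Q(Aᶜ) ≥ (1/2)·exp(−KL(P‖Q)). -/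
/-!
Write `f = dP/dQ`. Since `min f 1 ≤ f` on `A` and `min f 1 ≤ 1` on `Aᶜ`, the sum `P A + Q Aᶜ`
dominates `m = ∫ min f 1 dQ`. By Cauchy–Schwarz applied to `√(min f 1) · √(max f 1) = √f`,
`(∫ √f dQ)² ≤ m · ∫ max f 1 dQ ≤ 2m`. Finally `∫ √f dQ = ∫ exp (-llr / 2) dP`, which by Jensen
is at least `exp (-KL / 2)`.
-/

open MeasureTheory Real Set

lemma Real.mul_exp_neg_half_mul_log {x : ℝ} (hx : 0 ≤ x) : x * exp (-(1 / 2) * log x) = √x := by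
  rcases hx.eq_or_lt with rfl | hpos
  · simp
  · rw [mul_comm (-(1 / 2)), ← rpow_def_of_pos hpos, sqrt_eq_rpow]
    nth_rw 1 [← rpow_one x]
    rw [← rpow_add hpos]
    norm_num

section

variable {α : Type*} [MeasurableSpace α] {μ ν : Measure α}

lemma MeasureTheory.Integrable.sqrt_of_nonneg [IsFiniteMeasure μ] {g : α → ℝ}
    (hg : Integrable g μ) (hg0 : ∀ x, 0 ≤ g x) : Integrable (fun x ↦ √(g x)) μ := by
  refine (hg.add (integrable_const 1)).mono'
    hg.aestronglyMeasurable.aemeasurable.sqrt.aestronglyMeasurable (.of_forall fun x ↦ ?_)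
  rw [norm_of_nonneg (sqrt_nonneg _), Pi.add_apply]
  nlinarith [sq_sqrt (hg0 x), sqrt_nonneg (g x)]

lemma sq_integral_sqrt_mul_le {g h : α → ℝ} (hg0 : ∀ x, 0 ≤ g x) (hh0 : ∀ x, 0 ≤ h x)
    (hg : Integrable g μ) (hh : Integrable h μ) :
    (∫ x, √(g x * h x) ∂μ) ^ 2 ≤ (∫ x, g x ∂μ) * ∫ x, h x ∂μ := by
  have memLp_sqrt : ∀ {u : α → ℝ}, (∀ x, 0 ≤ u x) → Integrable u μ →
      MemLp (fun x ↦ √(u x)) (ENNReal.ofReal 2) μ := by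
    intro u hu0 hu
    rw [ENNReal.ofReal_ofNat, memLp_two_iff_integrable_sq
      hu.aestronglyMeasurable.aemeasurable.sqrt.aestronglyMeasurable]
    exact hu.congr (.of_forall fun x ↦ (sq_sqrt (hu0 x)).symm)
  have holder := integral_mul_le_Lp_mul_Lq_of_nonneg HolderConjugate.two_two
    (.of_forall fun x ↦ sqrt_nonneg (g x)) (.of_forall fun x ↦ sqrt_nonneg (h x))
    (memLp_sqrt hg0 hg) (memLp_sqrt hh0 hh)
  simp only [rpow_two, sq_sqrt (hg0 _), sq_sqrt (hh0 _), ← sqrt_mul (hg0 _),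
    ← sqrt_eq_rpow] at holder
  calc (∫ x, √(g x * h x) ∂μ) ^ 2 ≤ (√(∫ x, g x ∂μ) * √(∫ x, h x ∂μ)) ^ 2 :=
        pow_le_pow_left₀ (integral_nonneg fun _ ↦ sqrt_nonneg _) holder 2
    _ = (∫ x, g x ∂μ) * ∫ x, h x ∂μ := by
        rw [mul_pow, sq_sqrt (integral_nonneg hg0), sq_sqrt (integral_nonneg hh0)]

variable [IsFiniteMeasure μ] [IsFiniteMeasure ν]

lemma integral_min_toReal_rnDeriv_one_le {A : Set α} (hA : MeasurableSet A) :
    ∫ x, min (μ.rnDeriv ν x).toReal 1 ∂ν ≤ μ.real A + ν.real Aᶜ := by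
  have hf : Integrable (fun x ↦ (μ.rnDeriv ν x).toReal) ν := Measure.integrable_toReal_rnDeriv
  have hmin : Integrable (fun x ↦ min (μ.rnDeriv ν x).toReal 1) ν :=
    hf.inf (integrable_const 1)
  rw [← integral_add_compl hA hmin]
  gcongr
  · calc ∫ x in A, min (μ.rnDeriv ν x).toReal 1 ∂ν
          ≤ ∫ x in A, (μ.rnDeriv ν x).toReal ∂ν :=
          setIntegral_mono hmin.integrableOn hf.integrableOn fun _ ↦ min_le_left _ _
      _ ≤ μ.real A := Measure.setIntegral_toReal_rnDeriv_le (measure_ne_top μ A)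
  · calc ∫ x in Aᶜ, min (μ.rnDeriv ν x).toReal 1 ∂ν ≤ ∫ _ in Aᶜ, (1 : ℝ) ∂ν :=
          setIntegral_mono hmin.integrableOn (integrable_const 1).integrableOn
            fun _ ↦ min_le_right _ _
      _ = ν.real Aᶜ := by simp

lemma integral_max_toReal_rnDeriv_one_le :
    ∫ x, max (μ.rnDeriv ν x).toReal 1 ∂ν ≤ μ.real univ + ν.real univ := by
  have hf : Integrable (fun x ↦ (μ.rnDeriv ν x).toReal) ν := Measure.integrable_toReal_rnDeriv
  calc ∫ x, max (μ.rnDeriv ν x).toReal 1 ∂ν ≤ ∫ x, ((μ.rnDeriv ν x).toReal + 1) ∂ν :=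
        integral_mono (hf.sup (integrable_const 1)) (hf.add (integrable_const 1))
          fun x ↦ max_le (by simp) (by simp)
    _ = ∫ x, (μ.rnDeriv ν x).toReal ∂ν + ν.real univ := by
        rw [integral_add hf (integrable_const 1), integral_const, smul_eq_mul, mul_one]
    _ ≤ μ.real univ + ν.real univ := by
        gcongr
        simpa using Measure.setIntegral_toReal_rnDeriv_le (μ := μ) (ν := ν) (s := univ)
          (measure_ne_top μ univ)

lemma sq_integral_sqrt_toReal_rnDeriv_le :
    (∫ x, √(μ.rnDeriv ν x).toReal ∂ν) ^ 2
      ≤ (μ.real univ + ν.real univ) * ∫ x, min (μ.rnDeriv ν x).toReal 1 ∂ν := by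
  have hf : Integrable (fun x ↦ (μ.rnDeriv ν x).toReal) ν := Measure.integrable_toReal_rnDeriv
  have cauchy_schwarz := sq_integral_sqrt_mul_le (g := fun x ↦ min (μ.rnDeriv ν x).toReal 1)
    (h := fun x ↦ max (μ.rnDeriv ν x).toReal 1) (fun x ↦ le_min ENNReal.toReal_nonneg zero_le_one)
    (fun x ↦ le_max_of_le_right zero_le_one)
    (hf.inf (integrable_const 1)) (hf.sup (integrable_const 1))
  simp only [min_mul_max, mul_one] at cauchy_schwarz
  refine cauchy_schwarz.trans ?_
  rw [mul_comm]
  gcongr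
  exact integral_max_toReal_rnDeriv_one_le

end

lemma exp_neg_half_integral_llr_le {α : Type*} [MeasurableSpace α] {μ ν : Measure α}
    [IsProbabilityMeasure μ] [IsFiniteMeasure ν] (hμν : μ ≪ ν) (hint : Integrable (llr μ ν) μ) :
    exp (-(1 / 2) * ∫ x, llr μ ν x ∂μ) ≤ ∫ x, √(μ.rnDeriv ν x).toReal ∂ν := by
  have sqrt_eq_smul : (fun x ↦ √(μ.rnDeriv ν x).toReal)
      = fun x ↦ (μ.rnDeriv ν x).toReal • exp (-(1 / 2) * llr μ ν x) := by
    ext x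
    rw [smul_eq_mul, llr, mul_exp_neg_half_mul_log ENNReal.toReal_nonneg]
  have hexp : Integrable (fun x ↦ exp (-(1 / 2) * llr μ ν x)) μ := by
    rw [← integrable_rnDeriv_smul_iff hμν, ← sqrt_eq_smul]
    exact Measure.integrable_toReal_rnDeriv.sqrt_of_nonneg fun _ ↦ ENNReal.toReal_nonneg
  rw [sqrt_eq_smul, integral_rnDeriv_smul hμν, ← integral_const_mul]
  exact convexOn_exp.map_integral_le continuous_exp.continuousOn isClosed_univ
    (.of_forall fun _ ↦ mem_univ _) (hint.const_mul _) hexp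

/-- Bretagnolle–Huber inequality, with
`KL(P‖Q) = ∫ log (dP/dQ) dP = ∫ llr P Q dP`. -/
theorem stmt_9 {Ω : Type*} [MeasurableSpace Ω] (P Q : Measure Ω)
    [IsProbabilityMeasure P] [IsProbabilityMeasure Q]
    (hPQ : P ≪ Q) (hint : Integrable (llr P Q) P)
    (A : Set Ω) (hA : MeasurableSet A) :
    (P A).toReal + (Q Aᶜ).toReal ≥ (1 / 2) * Real.exp (-∫ x, llr P Q x ∂P) := by
  have jensen := exp_neg_half_integral_llr_le hPQ hint
  have affinity := sq_integral_sqrt_toReal_rnDeriv_le (μ := P) (ν := Q)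
  have overlap := integral_min_toReal_rnDeriv_one_le (μ := P) (ν := Q) hA
  simp only [probReal_univ] at affinity
  have exp_eq_sq : exp (-∫ x, llr P Q x ∂P) = exp (-(1 / 2) * ∫ x, llr P Q x ∂P) ^ 2 := by
    rw [← exp_nat_mul]
    ring_nf
  calc (1 / 2) * exp (-∫ x, llr P Q x ∂P)
      ≤ (1 / 2) * (∫ x, √(P.rnDeriv Q x).toReal ∂Q) ^ 2 := by rw [exp_eq_sq]; gcongr
    _ ≤ P.real A + Q.real Aᶜ := by linarith
end
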